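/- For nonnegative integers $j \le k \le \ell$, the Pfaff–Saalschütz identity yields ${}_3F_2(-j, j+1, -\ell-1; 1, -\ell; 1) = (-1)^j \binom{\ell+j+1}{j} \binom{\ell}{j}^{-1}$. -/

import Mathlib

/-- Pochhammer symbol (rising factorial) over ℂ. -/
noncomputable def poch (x : ℂ) (m : ℕ) : ℂ := ∏ i ∈ Finset.range m, (x + i)

open Finset

lemma PS.altsum (c : ℕ) : ∑ t ∈ range (c+1), (-1:ℤ)^t * ((c+1).choose (t+1)) = 1 := by
  have h0 := Int.alternating_sum_range_choose_of_ne (n := c+1) (by omega)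
  rw [Finset.sum_range_succ'] at h0
  simp only [pow_succ, pow_zero, Nat.choose_zero_right, Nat.cast_one, one_mul] at h0
  have h1 : ∑ t ∈ range (c+1), (-1:ℤ)^t * (-1) * ((c+1).choose (t+1)) = -1 := by linarith
  have e : ∑ t ∈ range (c+1), (-1:ℤ)^t * (-1) * ((c+1).choose (t+1))
      = -∑ t ∈ range (c+1), (-1:ℤ)^t * ((c+1).choose (t+1)) := by
    rw [← Finset.sum_neg_distrib]; apply Finset.sum_congr rfl; intros; ring
  rw [e] at h1; linarith

lemma PS.lemA : ∀ c B : ℕ, c ≤ B →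
    ∑ t ∈ range (c+1), (-1:ℤ)^t * ((B+1).choose t) * ((B-t).choose (c-t)) = (-1)^c := by
  intro c
  induction c with
  | zero => intro B _; simp
  | succ c ih =>
    intro B h
    obtain ⟨B, rfl⟩ : ∃ B', B = B' + 1 := ⟨B - 1, by omega⟩
    rw [Finset.sum_range_succ']
    have key : ∀ t ∈ range (c+1),
        (-1:ℤ)^(t+1) * ((B+1+1).choose (t+1)) * ((B+1-(t+1)).choose (c+1-(t+1)))
        = (-((-1:ℤ)^t * ((B+1).choose t) * ((B-t).choose (c-t))))
          + (-(((B+1).choose (c+1) : ℤ) * ((-1)^t * ((c+1).choose (t+1))))) := by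
      intro t ht
      simp only [mem_range] at ht
      have h1 : (B+1+1).choose (t+1) = (B+1).choose t + (B+1).choose (t+1) :=
        Nat.choose_succ_succ _ _
      have h2 : (B+1).choose (c+1) * (c+1).choose (t+1)
          = (B+1).choose (t+1) * ((B+1-(t+1)).choose ((c+1)-(t+1))) :=
        Nat.choose_mul (by omega)
      have e1 : B+1-(t+1) = B - t := by omega
      have e2 : c+1-(t+1) = c - t := by omega
      rw [e1, e2] at h2
      have h2c : (((B+1).choose (c+1) : ℤ)) * ((c+1).choose (t+1))
          = ((B+1).choose (t+1) : ℤ) * ((B-t).choose (c-t)) := by exact_mod_cast h2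
      rw [e1, e2, h1]
      push_cast
      linear_combination ((-1:ℤ)^t) * h2c
    rw [Finset.sum_congr rfl key, Finset.sum_add_distrib, Finset.sum_neg_distrib,
      Finset.sum_neg_distrib, ih B (by omega)]
    have alt : ∑ t ∈ range (c+1), (((B+1).choose (c+1) : ℤ) * ((-1)^t * ((c+1).choose (t+1))))
        = ((B+1).choose (c+1) : ℤ) := by
      rw [← Finset.mul_sum]
      rw [show ∑ t ∈ range (c+1), ((-1:ℤ)^t * ((c+1).choose (t+1)))
        = (1:ℤ) from PS.altsum c]
      ring
    rw [alt]
    simp [pow_succ]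

lemma PS.vand_symm (a n : ℕ) :
    (a+n).choose n = ∑ i ∈ range (n+1), a.choose i * n.choose i := by
  rw [Nat.add_choose_eq, Finset.Nat.sum_antidiagonal_eq_sum_range_succ_mk]
  apply Finset.sum_congr rfl
  intro i hi
  simp only [mem_range] at hi
  have : n.choose (n - i) = n.choose i := Nat.choose_symm (by omega)
  simp [this]

lemma PS.step1 (j m : ℕ) (h : m ≤ j) :
    (j+m).choose m = ∑ i ∈ range (j+1), j.choose i * m.choose i := by
  rw [PS.vand_symm]
  apply Finset.sum_subset
  · intro x hx; simp only [mem_range] at hx ⊢; omega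
  · intro x _ hx
    simp only [mem_range, not_lt] at hx
    rw [Nat.choose_eq_zero_of_lt (show m < x by omega)]; simp

lemma PS.main_int (ℓ j : ℕ) (h : j ≤ ℓ) :
    ∑ m ∈ range (j+1),
      (-1:ℤ)^m * ((j+m).choose m) * ((ℓ+1).choose m) * ((ℓ-m).choose (j-m))
    = (-1)^j * ((ℓ+j+1).choose j) := by
  have e1 : ∀ m ∈ range (j+1),
      (-1:ℤ)^m * ((j+m).choose m) * ((ℓ+1).choose m) * ((ℓ-m).choose (j-m))
      = ∑ i ∈ range (j+1), (-1:ℤ)^m * (j.choose i) * (m.choose i) *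
          ((ℓ+1).choose m) * ((ℓ-m).choose (j-m)) := by
    intro m hm
    simp only [mem_range] at hm
    have hstep := PS.step1 j m (by omega)
    have hc : ((j+m).choose m : ℤ) = ∑ i ∈ range (j+1), (j.choose i : ℤ) * (m.choose i) := by
      exact_mod_cast congrArg (Nat.cast : ℕ → ℤ) hstep
    rw [hc, Finset.mul_sum, Finset.sum_mul, Finset.sum_mul]
    apply Finset.sum_congr rfl; intros; ring
  rw [Finset.sum_congr rfl e1, Finset.sum_comm]
  have e2 : ∀ i ∈ range (j+1),
      ∑ m ∈ range (j+1), (-1:ℤ)^m * (j.choose i) * (m.choose i) *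
          ((ℓ+1).choose m) * ((ℓ-m).choose (j-m))
      = (-1:ℤ)^j * (j.choose i) * ((ℓ+1).choose i) := by
    intro i hi
    simp only [mem_range] at hi
    rw [Finset.range_eq_Ico]
    rw [← Finset.sum_Ico_consecutive _ (Nat.zero_le i) (by omega : i ≤ j+1)]
    have zlo : ∑ m ∈ Ico 0 i, (-1:ℤ)^m * (j.choose i) * (m.choose i) *
          ((ℓ+1).choose m) * ((ℓ-m).choose (j-m)) = 0 := by
      apply Finset.sum_eq_zero
      intro m hm
      simp only [mem_Ico] at hm
      rw [Nat.choose_eq_zero_of_lt (show m < i by omega)]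
      simp
    rw [zlo, zero_add, Finset.sum_Ico_eq_sum_range]
    have e3 : ∀ t ∈ range (j+1-i),
        (-1:ℤ)^(i+t) * (j.choose i) * ((i+t).choose i) * ((ℓ+1).choose (i+t)) *
          ((ℓ-(i+t)).choose (j-(i+t)))
        = ((-1:ℤ)^i * (j.choose i) * ((ℓ+1).choose i)) *
            ((-1:ℤ)^t * (((ℓ-i)+1).choose t) * (((ℓ-i)-t).choose ((j-i)-t))) := by
      intro t ht
      simp only [mem_range] at ht
      have hcm : (ℓ+1).choose (i+t) * (i+t).choose i
          = (ℓ+1).choose i * ((ℓ+1-i).choose (i+t-i)) :=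
        Nat.choose_mul (by omega)
      have r1 : ℓ+1-i = (ℓ-i)+1 := by omega
      have r2 : i+t-i = t := by omega
      have r3 : ℓ-(i+t) = (ℓ-i)-t := by omega
      have r4 : j-(i+t) = (j-i)-t := by omega
      rw [r1, r2] at hcm
      have hcmz : ((ℓ+1).choose (i+t) : ℤ) * ((i+t).choose i)
          = ((ℓ+1).choose i : ℤ) * (((ℓ-i)+1).choose t) := by exact_mod_cast hcm
      rw [r3, r4, pow_add]
      linear_combination ((-1:ℤ)^i * (-1:ℤ)^t * (j.choose i) * (((ℓ-i)-t).choose ((j-i)-t))) * hcmz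
    rw [Finset.sum_congr rfl e3, ← Finset.mul_sum]
    rw [show j+1-i = (j-i)+1 by omega]
    rw [PS.lemA (j-i) (ℓ-i) (by omega)]
    have hsgn : (-1:ℤ)^i * (-1:ℤ)^(j-i) = (-1:ℤ)^j := by
      rw [← pow_add]; congr 1; omega
    linear_combination ((j.choose i : ℤ) * ((ℓ+1).choose i)) * hsgn
  rw [Finset.sum_congr rfl e2]
  have e4 : (ℓ+j+1).choose j = ∑ i ∈ range (j+1), (ℓ+1).choose i * j.choose i := by
    have hv := PS.vand_symm (ℓ+1) j
    rwa [show ℓ+1+j = ℓ+j+1 by omega] at hv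
  have e4c : ((ℓ+j+1).choose j : ℤ) = ∑ i ∈ range (j+1), ((ℓ+1).choose i : ℤ) * (j.choose i) := by
    exact_mod_cast e4
  rw [e4c]
  simp only [mul_assoc]
  rw [← Finset.mul_sum]
  congr 1
  apply Finset.sum_congr rfl
  intros; ring

lemma PS.poch_succ (x : ℂ) (m : ℕ) : poch x (m+1) = poch x m * (x + m) :=
  Finset.prod_range_succ _ m

lemma PS.poch_one_eq (m : ℕ) : poch 1 m = (m.factorial : ℂ) := by
  induction m with
  | zero => simp [poch]
  | succ m ih => rw [PS.poch_succ, ih]; push_cast [Nat.factorial_succ]; ring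

lemma PS.poch_shift (j : ℕ) (m : ℕ) :
    poch ((j:ℂ)+1) m * (j.factorial : ℂ) = ((j+m).factorial : ℂ) := by
  induction m with
  | zero => simp [poch]
  | succ m ih =>
    rw [PS.poch_succ, mul_right_comm, ih, show j+(m+1) = (j+m)+1 by omega]
    push_cast [Nat.factorial_succ]
    ring

lemma PS.poch_neg_nat (n : ℕ) : ∀ m, m ≤ n →
    poch (-(n:ℂ)) m = (-1)^m * (m.factorial : ℂ) * (n.choose m : ℂ) := by
  intro m
  induction m with
  | zero => intro _; simp [poch]
  | succ m ih =>
    intro h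
    rw [PS.poch_succ, ih (by omega)]
    have hrec : (n.choose (m+1)) * (m+1) = n.choose m * (n - m) := Nat.choose_succ_right_eq n m
    have hcast : ((n.choose (m+1) : ℂ)) * (m+1) = (n.choose m : ℂ) * ((n:ℂ) - m) := by
      have hc2 : ((n.choose (m+1) : ℂ)) * (m+1) = ((n.choose m : ℂ)) * (((n - m : ℕ) : ℂ)) := by
        exact_mod_cast congrArg (Nat.cast : ℕ → ℂ) hrec
      rw [hc2, Nat.cast_sub (by omega)]
    push_cast [Nat.factorial_succ]
    linear_combination ((-1:ℂ))^m * (m.factorial : ℂ) * hcast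

lemma PS.term_eq (ℓ j m : ℕ) (hm : m ≤ j) (hj : j ≤ ℓ) :
    poch (-(j : ℂ)) m * poch ((j : ℂ) + 1) m * poch (-(ℓ : ℂ) - 1) m /
        (poch 1 m * poch (-(ℓ : ℂ)) m * (m.factorial : ℂ)) =
    ((-1:ℂ))^m * ((j+m).choose m) * ((ℓ+1).choose m) * ((ℓ-m).choose (j-m)) / (ℓ.choose j) := by
  have h1 : poch (-(j:ℂ)) m = (-1)^m * (m.factorial : ℂ) * (j.choose m) := PS.poch_neg_nat j m hm
  have h2 : poch (-(ℓ:ℂ)) m = (-1)^m * (m.factorial : ℂ) * (ℓ.choose m) :=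
    PS.poch_neg_nat ℓ m (hm.trans hj)
  have h3 : poch (-(ℓ:ℂ)-1) m = (-1)^m * (m.factorial : ℂ) * ((ℓ+1).choose m) := by
    have h := PS.poch_neg_nat (ℓ+1) m (by omega)
    rw [show (-(((ℓ+1):ℕ):ℂ)) = -(ℓ:ℂ)-1 by push_cast; ring] at h
    exact h
  have h4 := PS.poch_shift j m
  have h5 := PS.poch_one_eq m
  have f1 : (m.factorial : ℂ) ≠ 0 := Nat.cast_ne_zero.2 (Nat.factorial_ne_zero m)
  have f2 : (j.factorial : ℂ) ≠ 0 := Nat.cast_ne_zero.2 (Nat.factorial_ne_zero j)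
  have f3 : ((ℓ.choose m : ℕ) : ℂ) ≠ 0 := Nat.cast_ne_zero.2 (Nat.choose_pos (hm.trans hj)).ne'
  have f4 : ((ℓ.choose j : ℕ) : ℂ) ≠ 0 := Nat.cast_ne_zero.2 (Nat.choose_pos hj).ne'
  have hfC : ((j+m).choose m : ℂ) * (j.factorial : ℂ) * (m.factorial : ℂ)
      = ((j+m).factorial : ℂ) := by
    exact_mod_cast congrArg (Nat.cast : ℕ → ℂ) (Nat.add_choose_mul_factorial_mul_factorial j m)
  have hcmC : ((ℓ.choose j : ℕ) : ℂ) * (j.choose m) = (ℓ.choose m : ℂ) * ((ℓ-m).choose (j-m)) := by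
    exact_mod_cast congrArg (Nat.cast : ℕ → ℂ) (Nat.choose_mul (n := ℓ) hm)
  have fm1 : ((-1:ℂ))^m ≠ 0 := pow_ne_zero _ (by norm_num)
  have hB' : poch ((j:ℂ)+1) m = ((j+m).choose m : ℂ) * (m.factorial : ℂ) := by
    apply mul_right_cancel₀ f2
    rw [h4, ← hfC]; ring
  rw [h1, h2, h3, hB', h5]
  rw [div_eq_div_iff (mul_ne_zero (mul_ne_zero f1 (mul_ne_zero (mul_ne_zero fm1 f1) f3)) f1) f4]
  linear_combination ((-1:ℂ)^m * (-1:ℂ)^m * (m.factorial:ℂ)^3 * ((j+m).choose m : ℂ) *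
    (((ℓ+1).choose m : ℕ) : ℂ)) * hcmC

/-- Pfaff–Saalschütz:
`₃F₂(-j, j+1, -ℓ-1; 1, -ℓ; 1) = (-1)^j (ℓ+j+1 choose j) (ℓ choose j)⁻¹` for `j ≤ k ≤ ℓ`. -/
theorem pfaff_saalschuetz_value (ℓ j k : ℕ) (hjk : j ≤ k) (hk : k ≤ ℓ) :
    ∑ m ∈ Finset.range (j + 1),
      (poch (-(j : ℂ)) m * poch ((j : ℂ) + 1) m * poch (-(ℓ : ℂ) - 1) m) /
        (poch 1 m * poch (-(ℓ : ℂ)) m * (Nat.factorial m : ℂ)) =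
      (-1) ^ j * (Nat.choose (ℓ + j + 1) j : ℂ) / (Nat.choose ℓ j : ℂ) := by
  have hj : j ≤ ℓ := hjk.trans hk
  have key : ∀ m ∈ Finset.range (j+1),
      (poch (-(j : ℂ)) m * poch ((j : ℂ) + 1) m * poch (-(ℓ : ℂ) - 1) m) /
        (poch 1 m * poch (-(ℓ : ℂ)) m * (Nat.factorial m : ℂ))
      = (((-1:ℤ)^m * ((j+m).choose m) * ((ℓ+1).choose m) * ((ℓ-m).choose (j-m)) : ℤ) : ℂ)
          / (ℓ.choose j : ℂ) := by
    intro m hm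
    simp only [Finset.mem_range] at hm
    rw [PS.term_eq ℓ j m (by omega) hj]
    push_cast
    ring
  rw [Finset.sum_congr rfl key, ← Finset.sum_div, ← Int.cast_sum, PS.main_int ℓ j hj]
  push_cast
  ring
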